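/- arXiv:2105.14397 — 2 statements merged into one kernel-verified Lean document; each statement's English description precedes it below -/
import Mathlib

section
/- If Ā is a sample Fréchet mean for the Hamming distance (a minimizer of ∑_k d_H²(·, A^{(k)})), then its number of edges satisfies e(Ā) ≤ 2·ē_N + σ_N(e)/√2, where ē_N is the sample mean and σ_N(e) the sample standard deviation of the edge counts. -/
open Finset

/-! Comparing the Fréchet mean `Ā` with the empty graph, whose Hamming distance to each
`A⁽ᵏ⁾` is `e(A⁽ᵏ⁾)`, and using `|e(Ā) - e(A⁽ᵏ⁾)| ≤ d_H(Ā, A⁽ᵏ⁾)`, gives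
`∑ₖ (e(Ā) - e(A⁽ᵏ⁾))² ≤ ∑ₖ e(A⁽ᵏ⁾)²`, i.e. `N e(Ā)² ≤ 2 e(Ā) ∑ₖ e(A⁽ᵏ⁾)`.
Hence `e(Ā) ≤ 2 ē_N`, and the standard-deviation term only adds a nonnegative quantity. -/

/-- `A` is the adjacency matrix of a simple labeled graph on `n` vertices:
symmetric, `{0,1}`-valued, zero diagonal. -/
def IsAdj {n : ℕ} (A : Matrix (Fin n) (Fin n) ℝ) : Prop :=
  (∀ i j, A i j = 0 ∨ A i j = 1) ∧ (∀ i j, A i j = A j i) ∧ (∀ i, A i i = 0)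

/-- Number of edges `e(A) = ∑_{i<j} a_{ij}`. -/
def edges {n : ℕ} (A : Matrix (Fin n) (Fin n) ℝ) : ℝ :=
  ∑ i : Fin n, ∑ j : Fin n, if i < j then A i j else 0

/-- Hamming distance `d_H(A,B) = ∑_{i<j} |a_{ij} - b_{ij}|`. -/
def hammingD {n : ℕ} (A B : Matrix (Fin n) (Fin n) ℝ) : ℝ :=
  ∑ i : Fin n, ∑ j : Fin n, if i < j then |A i j - B i j| else 0

lemma isAdj_zero {n : ℕ} : IsAdj (0 : Matrix (Fin n) (Fin n) ℝ) :=
  ⟨fun _ _ => Or.inl rfl, fun _ _ => rfl, fun _ => rfl⟩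

lemma IsAdj.nonneg {n : ℕ} {A : Matrix (Fin n) (Fin n) ℝ} (h : IsAdj A) (i j : Fin n) :
    0 ≤ A i j := by
  rcases h.1 i j with h' | h' <;> simp [h']

section

variable {n : ℕ}

lemma edges_nonneg {A : Matrix (Fin n) (Fin n) ℝ} (h : ∀ i j, 0 ≤ A i j) : 0 ≤ edges A :=
  sum_nonneg fun i _ => sum_nonneg fun j _ => by split_ifs <;> simp [h i j]

lemma hammingD_zero_left {A : Matrix (Fin n) (Fin n) ℝ} (h : ∀ i j, 0 ≤ A i j) :
    hammingD 0 A = edges A :=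
  sum_congr rfl fun i _ => sum_congr rfl fun j _ => by
    split_ifs <;> simp [abs_of_nonneg (h i j)]

lemma abs_edges_sub_le_hammingD (A B : Matrix (Fin n) (Fin n) ℝ) :
    |edges A - edges B| ≤ hammingD A B := by
  have hdiff : edges A - edges B =
      ∑ i : Fin n, ∑ j : Fin n, if i < j then A i j - B i j else 0 := by
    simp only [edges, ← sum_sub_distrib]
    exact sum_congr rfl fun i _ => sum_congr rfl fun j _ => by split_ifs <;> simp
  rw [hdiff]
  refine (abs_sum_le_sum_abs _ _).trans (sum_le_sum fun i _ => ?_)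
  refine (abs_sum_le_sum_abs _ _).trans (sum_le_sum fun j _ => ?_)
  split_ifs <;> simp

end

lemma card_mul_le_two_mul_sum_of_sum_sq_sub_le {ι : Type*} [Fintype ι] (e : ι → ℝ) (x : ℝ)
    (hsum : 0 ≤ ∑ i, e i) (hsq : ∑ i, (x - e i) ^ 2 ≤ ∑ i, e i ^ 2) :
    Fintype.card ι * x ≤ 2 * ∑ i, e i := by
  have hexpand : ∑ i, (x - e i) ^ 2 =
      Fintype.card ι * x ^ 2 - 2 * x * ∑ i, e i + ∑ i, e i ^ 2 := by
    simp only [sub_sq, sum_add_distrib, sum_sub_distrib, sum_const, card_univ, nsmul_eq_mul,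
      mul_sum]
  have hquad : Fintype.card ι * x ^ 2 ≤ 2 * x * ∑ i, e i := by linarith
  rcases le_or_gt x 0 with hx | hx
  · nlinarith [(Fintype.card ι).cast_nonneg (α := ℝ)]
  · nlinarith

theorem frechet_mean_edges_bound_general {n N : ℕ} (hN : 0 < N)
    (A : Fin N → Matrix (Fin n) (Fin n) ℝ) (hA : ∀ k, IsAdj (A k))
    (Abar : Matrix (Fin n) (Fin n) ℝ)
    (hmin : ∀ B : Matrix (Fin n) (Fin n) ℝ, IsAdj B →
      ∑ k : Fin N, (hammingD Abar (A k)) ^ 2 ≤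
        ∑ k : Fin N, (hammingD B (A k)) ^ 2) :
    edges Abar ≤
      2 * ((1 : ℝ) / N * ∑ k : Fin N, edges (A k)) +
        Real.sqrt ((1 : ℝ) / N * ∑ k : Fin N, (edges (A k)) ^ 2 -
          ((1 : ℝ) / N * ∑ k : Fin N, edges (A k)) ^ 2) / Real.sqrt 2 := by
  have hsq : ∑ k, (edges Abar - edges (A k)) ^ 2 ≤ ∑ k, edges (A k) ^ 2 :=
    calc ∑ k, (edges Abar - edges (A k)) ^ 2
        ≤ ∑ k, hammingD Abar (A k) ^ 2 := sum_le_sum fun k _ =>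
          sq_le_sq.mpr ((abs_edges_sub_le_hammingD _ _).trans (le_abs_self _))
      _ ≤ ∑ k, hammingD 0 (A k) ^ 2 := hmin 0 isAdj_zero
      _ = ∑ k, edges (A k) ^ 2 := by simp only [hammingD_zero_left (hA _).nonneg]
  have hmean : N * edges Abar ≤ 2 * ∑ k, edges (A k) := by
    simpa using card_mul_le_two_mul_sum_of_sum_sq_sub_le _ _
      (sum_nonneg fun k _ => edges_nonneg (hA k).nonneg) hsq
  have hN' : (0 : ℝ) < N := by exact_mod_cast hN
  have hbound : edges Abar ≤ 2 * ((1 : ℝ) / N * ∑ k, edges (A k)) := by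
    rw [one_div, ← mul_assoc, mul_comm 2, mul_assoc, le_inv_mul_iff₀ hN']
    exact hmean
  have hstd := div_nonneg (Real.sqrt_nonneg ((1 : ℝ) / N * ∑ k, edges (A k) ^ 2 -
    ((1 : ℝ) / N * ∑ k, edges (A k)) ^ 2)) (Real.sqrt_nonneg 2)
  linarith

theorem frechet_mean_edges_bound {n N : ℕ} (hN : 0 < N)
    (A : Fin N → Matrix (Fin n) (Fin n) ℝ) (hA : ∀ k, IsAdj (A k))
    (Abar : Matrix (Fin n) (Fin n) ℝ) (hAbar : IsAdj Abar)
    (hmin : ∀ B : Matrix (Fin n) (Fin n) ℝ, IsAdj B →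
      ∑ k : Fin N, (hammingD Abar (A k)) ^ 2 ≤
        ∑ k : Fin N, (hammingD B (A k)) ^ 2) :
    edges Abar ≤
      2 * ((1 : ℝ) / N * ∑ k : Fin N, edges (A k)) +
        Real.sqrt ((1 : ℝ) / N * ∑ k : Fin N, (edges (A k)) ^ 2 -
          ((1 : ℝ) / N * ∑ k : Fin N, edges (A k)) ^ 2) / Real.sqrt 2 :=
  frechet_mean_edges_bound_general hN A hA Abar hmin
end

section
/- If M is a sample Fréchet median with respect to the adjacency spectral pseudometric (λ(M) minimizes ∑_k ‖λ - λ(A^{(k)})‖ over realizable spectra), and there exists k₀ with ‖λ(A^{(k₀)})‖ ≤ ‖λ̄‖, then ‖λ(M)‖ ≤ 3√(2·ē_N). -/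
/-!
If `λ(M)` minimizes `∑ₖ ‖λ - λ(Aₖ)‖` among realizable spectra, comparing with the competitor
`λ(A_{k₀})` and using the triangle inequality twice gives
`N ‖λ(M)‖ ≤ N ‖λ(A_{k₀})‖ + 2 ∑ₖ ‖λ(Aₖ)‖`, while `‖λ(A_{k₀})‖ ≤ ‖λ̄‖ ≤ (1/N) ∑ₖ ‖λ(Aₖ)‖`.
For an adjacency matrix `‖λ(A)‖² = tr A² = 2 e(A)`, and concavity of `√` bounds the mean of
`√(2 e(Aₖ))` by `√(2 ē_N)`.
-/

open Finset

/-- Euclidean norm of a vector in `ℝⁿ`. -/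
noncomputable def vnorm {n : ℕ} (v : Fin n → ℝ) : ℝ :=
  Real.sqrt (∑ i : Fin n, v i ^ 2)

theorem Matrix.IsHermitian.trace_mul_self_eq_sum_sq_eigenvalues {𝕜 n : Type*} [RCLike 𝕜]
    [Fintype n] [DecidableEq n] {A : Matrix n n 𝕜} (hA : A.IsHermitian) :
    (A * A).trace = ∑ i, (hA.eigenvalues i : 𝕜) ^ 2 := by
  conv_lhs => rw [hA.spectral_theorem, ← map_mul, Unitary.conjStarAlgAut_apply,
    Matrix.trace_mul_cycle, Unitary.coe_star_mul_self, one_mul, Matrix.diagonal_mul_diagonal,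
    Matrix.trace_diagonal]
  simp [sq]

theorem sum_entries_eq_two_mul_edges {n : ℕ} {B : Matrix (Fin n) (Fin n) ℝ}
    (hsymm : ∀ i j, B i j = B j i) (hdiag : ∀ i, B i i = 0) :
    ∑ i, ∑ j, B i j = 2 * edges B := by
  have hsplit : ∀ i j, B i j = (if i < j then B i j else 0) + (if j < i then B j i else 0) := by
    intro i j
    rcases lt_trichotomy i j with h | rfl | h
    · simp [h, h.not_gt]
    · simp [hdiag]
    · simp [h, h.not_gt, hsymm i j]
  calc ∑ i, ∑ j, B i j
      = ∑ i, ∑ j, ((if i < j then B i j else 0) + (if j < i then B j i else 0)) :=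
        Finset.sum_congr rfl fun i _ => Finset.sum_congr rfl fun j _ => hsplit i j
    _ = 2 * edges B := by
        simp only [Finset.sum_add_distrib]
        rw [Finset.sum_comm (f := fun i j => if j < i then B j i else 0), edges, two_mul]

namespace IsAdj

variable {n : ℕ} {B : Matrix (Fin n) (Fin n) ℝ}

theorem edges_nonneg (h : IsAdj B) : 0 ≤ edges B :=
  Finset.sum_nonneg fun i _ => Finset.sum_nonneg fun j _ => by
    rcases h.1 i j with h01 | h01 <;> split_ifs <;> simp [h01]

theorem trace_mul_self (h : IsAdj B) : (B * B).trace = 2 * edges B := by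
  obtain ⟨h01, hsymm, hdiag⟩ := h
  rw [← sum_entries_eq_two_mul_edges hsymm hdiag, Matrix.trace]
  refine Finset.sum_congr rfl fun i _ => ?_
  rw [Matrix.diag_apply, Matrix.mul_apply]
  refine Finset.sum_congr rfl fun j _ => ?_
  rw [← hsymm i j]
  rcases h01 i j with h | h <;> simp [h]

theorem vnorm_eigenvalues (h : IsAdj B) (hB : B.IsHermitian) :
    vnorm hB.eigenvalues = √(2 * edges B) := by
  rw [vnorm, ← h.trace_mul_self, hB.trace_mul_self_eq_sum_sq_eigenvalues]
  simp

end IsAdj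

theorem vnorm_eq_norm_toLp {n : ℕ} (v : Fin n → ℝ) : vnorm v = ‖WithLp.toLp 2 v‖ := by
  simp [vnorm, EuclideanSpace.norm_eq]

section FrechetMedian

variable {E ι : Type*} [SeminormedAddCommGroup E] [Fintype ι]

theorem card_mul_norm_le_of_sum_norm_sub_le (a : ι → E) {m : E} (k₀ : ι)
    (hmin : ∑ k, ‖m - a k‖ ≤ ∑ k, ‖a k₀ - a k‖) :
    Fintype.card ι * ‖m‖ ≤ Fintype.card ι * ‖a k₀‖ + 2 * ∑ k, ‖a k‖ := by
  have hconst : ∀ x : ℝ, ∑ _k : ι, x = Fintype.card ι * x := fun x => by simp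
  calc (Fintype.card ι : ℝ) * ‖m‖ = ∑ _k : ι, ‖m‖ := (hconst _).symm
    _ ≤ ∑ k, (‖m - a k‖ + ‖a k‖) := Finset.sum_le_sum fun k _ => norm_le_norm_sub_add m (a k)
    _ ≤ ∑ k, ‖a k₀ - a k‖ + ∑ k, ‖a k‖ := by rw [Finset.sum_add_distrib]; gcongr
    _ ≤ ∑ k, (‖a k₀‖ + ‖a k‖) + ∑ k, ‖a k‖ := by gcongr; exact norm_sub_le _ _
    _ = Fintype.card ι * ‖a k₀‖ + 2 * ∑ k, ‖a k‖ := by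
        rw [Finset.sum_add_distrib, hconst]; ring

theorem norm_le_three_mul_mean_norm_of_sum_norm_sub_le [NormedSpace ℝ E] (a : ι → E) {m : E}
    (k₀ : ι) (hmin : ∑ k, ‖m - a k‖ ≤ ∑ k, ‖a k₀ - a k‖)
    (hk₀ : ‖a k₀‖ ≤ ‖(Fintype.card ι : ℝ)⁻¹ • ∑ k, a k‖) :
    ‖m‖ ≤ 3 * ((Fintype.card ι : ℝ)⁻¹ * ∑ k, ‖a k‖) := by
  have hcard : (0 : ℝ) < Fintype.card ι := by
    have : Nonempty ι := ⟨k₀⟩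
    exact_mod_cast Fintype.card_pos
  have hmean : ‖a k₀‖ ≤ (Fintype.card ι : ℝ)⁻¹ * ∑ k, ‖a k‖ := by
    refine hk₀.trans ?_
    rw [norm_smul, Real.norm_of_nonneg (by positivity)]
    gcongr
    exact norm_sum_le _ _
  have key := card_mul_norm_le_of_sum_norm_sub_le a k₀ hmin
  rw [← le_div_iff₀' hcard] at key
  calc ‖m‖ ≤ (Fintype.card ι * ‖a k₀‖ + 2 * ∑ k, ‖a k‖) / Fintype.card ι := key
    _ = ‖a k₀‖ + 2 * ((Fintype.card ι : ℝ)⁻¹ * ∑ k, ‖a k‖) := by field_simp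
    _ ≤ 3 * ((Fintype.card ι : ℝ)⁻¹ * ∑ k, ‖a k‖) := by linarith

end FrechetMedian

theorem Real.mean_sqrt_le_sqrt_mean {ι : Type*} [Fintype ι] [Nonempty ι] (x : ι → ℝ)
    (hx : ∀ i, 0 ≤ x i) :
    (Fintype.card ι : ℝ)⁻¹ * ∑ i, √(x i) ≤ √((Fintype.card ι : ℝ)⁻¹ * ∑ i, x i) := by
  have hcard : (0 : ℝ) < Fintype.card ι := by exact_mod_cast Fintype.card_pos
  have := Real.strictConcaveOn_sqrt.concaveOn.le_map_sum (t := Finset.univ)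
    (w := fun _ => (Fintype.card ι : ℝ)⁻¹) (p := x) (fun _ _ => by positivity)
    (by simp [hcard.ne']) (fun i _ => hx i)
  simpa only [smul_eq_mul, ← Finset.mul_sum] using this

theorem toLp_const_mul_sum {ι κ : Type*} (p : ENNReal) (c : ℝ) (s : Finset κ) (f : κ → ι → ℝ) :
    WithLp.toLp p (fun i => c * ∑ k ∈ s, f k i) = c • ∑ k ∈ s, WithLp.toLp p (f k) := by
  ext i
  simp [Finset.sum_apply]

theorem spectral_median_norm_bound_general {n N : ℕ}
    (A : Fin N → Matrix (Fin n) (Fin n) ℝ) (hadj : ∀ k, IsAdj (A k))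
    (hA : ∀ k, (A k).IsHermitian)
    (M : Matrix (Fin n) (Fin n) ℝ)
    (hM : M.IsHermitian)
    (hmin : ∀ (B : Matrix (Fin n) (Fin n) ℝ), IsAdj B → ∀ hB : B.IsHermitian,
      ∑ k : Fin N, vnorm (hM.eigenvalues - (hA k).eigenvalues) ≤
        ∑ k : Fin N, vnorm (hB.eigenvalues - (hA k).eigenvalues))
    (hk₀ : ∃ k₀ : Fin N, vnorm ((hA k₀).eigenvalues) ≤
      vnorm (fun i => (1 : ℝ) / N * ∑ k : Fin N, (hA k).eigenvalues i)) :
    vnorm hM.eigenvalues ≤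
      3 * Real.sqrt (2 * ((1 : ℝ) / N * ∑ k : Fin N, edges (A k))) := by
  obtain ⟨k₀, hk₀⟩ := hk₀
  have : Nonempty (Fin N) := ⟨k₀⟩
  have hmed := norm_le_three_mul_mean_norm_of_sum_norm_sub_le
    (fun k => WithLp.toLp 2 (hA k).eigenvalues) (m := WithLp.toLp 2 hM.eigenvalues) k₀
    (by simpa only [vnorm_eq_norm_toLp, WithLp.toLp_sub] using hmin _ (hadj k₀) (hA k₀))
    (by simpa [vnorm_eq_norm_toLp, toLp_const_mul_sum] using hk₀)
  calc vnorm hM.eigenvalues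
      ≤ 3 * ((Fintype.card (Fin N) : ℝ)⁻¹ * ∑ k, √(2 * edges (A k))) := by
        simpa only [← vnorm_eq_norm_toLp, fun k => (hadj k).vnorm_eigenvalues (hA k)] using hmed
    _ ≤ 3 * √((Fintype.card (Fin N) : ℝ)⁻¹ * ∑ k, 2 * edges (A k)) := by
        gcongr
        exact Real.mean_sqrt_le_sqrt_mean _ fun k => by linarith [(hadj k).edges_nonneg]
    _ = 3 * √(2 * ((1 : ℝ) / N * ∑ k, edges (A k))) := by
        rw [← Finset.mul_sum, Fintype.card_fin]; ring_nf

theorem spectral_median_norm_bound {n N : ℕ} (hN : 0 < N)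
    (A : Fin N → Matrix (Fin n) (Fin n) ℝ) (hadj : ∀ k, IsAdj (A k))
    (hA : ∀ k, (A k).IsHermitian)
    (M : Matrix (Fin n) (Fin n) ℝ) (hMadj : IsAdj M)
    (hM : M.IsHermitian)
    (hmin : ∀ (B : Matrix (Fin n) (Fin n) ℝ), IsAdj B → ∀ hB : B.IsHermitian,
      ∑ k : Fin N, vnorm (hM.eigenvalues - (hA k).eigenvalues) ≤
        ∑ k : Fin N, vnorm (hB.eigenvalues - (hA k).eigenvalues))
    (hk₀ : ∃ k₀ : Fin N, vnorm ((hA k₀).eigenvalues) ≤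
      vnorm (fun i => (1 : ℝ) / N * ∑ k : Fin N, (hA k).eigenvalues i)) :
    vnorm hM.eigenvalues ≤
      3 * Real.sqrt (2 * ((1 : ℝ) / N * ∑ k : Fin N, edges (A k))) :=
  spectral_median_norm_bound_general A hadj hA M hM hmin hk₀
end
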